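/- Let n, m be natural numbers and set k = n + m. Then 𝒫_x^n 𝒫_y^m [h^{(2k)}(x+y)] evaluated at (x,y) = (0,0) equals (2n−1)!! · (2m−1)!!. (All iterated integrals occurring here converge.) -/

import Mathlib

open MeasureTheory Set Filter Real

/-- The function `h(x) = 2/(1 + e^{x/2})`. -/
noncomputable def h (x : ℝ) : ℝ := 2 / (1 + Real.exp (x / 2))

/-- The operator `𝒫_x` in the first variable: `(𝒫_x F)(x,y) = ∫_x^∞ t·F(t,y) dt`. -/
noncomputable def Px (F : ℝ → ℝ → ℝ) : ℝ → ℝ → ℝ :=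
  fun x y => ∫ t in Set.Ioi x, t * F t y

/-- The operator `𝒫_y` in the second variable: `(𝒫_y F)(x,y) = ∫_y^∞ t·F(x,t) dt`. -/
noncomputable def Py (F : ℝ → ℝ → ℝ) : ℝ → ℝ → ℝ :=
  fun x y => ∫ t in Set.Ioi y, t * F x t

/-- The double factorial `(2n−1)!! = (2n)!/(2^n · n!)`, with `(−1)!! = 1`. -/
noncomputable def dfac (n : ℕ) : ℝ :=
  (Nat.factorial (2 * n) : ℝ) / (2 ^ n * Nat.factorial n)




/-- auxiliary: v x = 1/(1+e^{x/2}) -/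
noncomputable def vv (x : ℝ) : ℝ := (1 + Real.exp (x / 2))⁻¹

lemma one_add_exp_pos (x : ℝ) : 0 < 1 + Real.exp (x / 2) := by positivity

lemma vv_pos (x : ℝ) : 0 < vv x := by
  unfold vv; positivity

lemma vv_le_one (x : ℝ) : vv x ≤ 1 := by
  rw [vv, inv_le_one_iff₀]
  right; nlinarith [Real.exp_pos (x/2)]

lemma vv_le_exp (x : ℝ) : vv x ≤ Real.exp (-(x / 2)) := by
  rw [Real.exp_neg, vv]
  apply inv_anti₀ (Real.exp_pos _)
  linarith

lemma hasDerivAt_vv (x : ℝ) : HasDerivAt vv ((vv x ^ 2 - vv x) / 2) x := by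
  have h1 : HasDerivAt (fun x : ℝ => 1 + Real.exp (x / 2))
      (Real.exp (x / 2) * (1 / 2)) x := by
    have := ((hasDerivAt_id x).div_const 2).exp
    simpa using this.const_add 1
  have h2 := h1.inv (ne_of_gt (one_add_exp_pos x))
  convert h2 using 1
  · rfl
  · rfl
  · rfl
  have hv : Real.exp (x / 2) = (1 - vv x) / vv x := by
    rw [vv]
    field_simp
    ring
  rw [hv, vv]
  have hne : (1 + Real.exp (x / 2)) ≠ 0 := ne_of_gt (one_add_exp_pos x)
  have e : (1 - (1 + Real.exp (x / 2))⁻¹) / (1 + Real.exp (x / 2))⁻¹ = Real.exp (x / 2) := by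
    field_simp
    ring
  rw [e]
  field_simp
  ring

/-- Every iterated derivative of h is a polynomial (divisible by X) in vv. -/
lemma exists_poly_rep (r : ℕ) : ∃ p : Polynomial ℝ,
    Polynomial.X ∣ p ∧ iteratedDeriv r h = fun x => p.eval (vv x) := by
  induction r with
  | zero =>
    refine ⟨Polynomial.C 2 * Polynomial.X, ⟨Polynomial.C 2, mul_comm _ _⟩, ?_⟩
    funext x
    simp [iteratedDeriv_zero, h, vv, div_eq_mul_inv]
  | succ r ih =>
    obtain ⟨p, hdvd, hrep⟩ := ih
    refine ⟨Polynomial.C (1/2) * (Polynomial.X^2 - Polynomial.X) * p.derivative,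
      ⟨Polynomial.C (1/2) * (Polynomial.X - 1) * p.derivative, by ring⟩, ?_⟩
    funext x
    rw [iteratedDeriv_succ, hrep]
    have hd : HasDerivAt (fun x => p.eval (vv x))
        (p.derivative.eval (vv x) * ((vv x ^ 2 - vv x) / 2)) x :=
      (p.hasDerivAt (vv x)).comp x (hasDerivAt_vv x)
    rw [hd.deriv]
    simp
    ring

lemma hasDerivAt_iteratedDeriv_h (r : ℕ) (x : ℝ) :
    HasDerivAt (iteratedDeriv r h) (iteratedDeriv (r + 1) h x) x := by
  obtain ⟨p, _, hrep⟩ := exists_poly_rep r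
  have hd : ∀ y, HasDerivAt (iteratedDeriv r h)
      (p.derivative.eval (vv y) * ((vv y ^ 2 - vv y) / 2)) y := by
    intro y
    rw [hrep]
    exact (p.hasDerivAt (vv y)).comp y (hasDerivAt_vv y)
  have : iteratedDeriv (r + 1) h x = p.derivative.eval (vv x) * ((vv x ^ 2 - vv x) / 2) := by
    rw [iteratedDeriv_succ]
    exact (hd x).deriv
  rw [this]
  exact hd x

lemma continuous_iteratedDeriv_h (r : ℕ) : Continuous (iteratedDeriv r h) := by
  obtain ⟨p, _, hrep⟩ := exists_poly_rep r
  rw [hrep]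
  have : Continuous vv := by
    apply Continuous.inv₀
    · fun_prop
    · exact fun x => ne_of_gt (one_add_exp_pos x)
  exact p.continuous_aeval.comp this |>.congr (fun x => by simp)

/-- decay bound -/
lemma iteratedDeriv_h_bound (r : ℕ) : ∃ C : ℝ, 0 ≤ C ∧
    ∀ x, |iteratedDeriv r h x| ≤ C * Real.exp (-(x / 2)) := by
  obtain ⟨p, ⟨q, hq⟩, hrep⟩ := exists_poly_rep r
  refine ⟨∑ i ∈ Finset.range (q.natDegree + 1), |q.coeff i|, Finset.sum_nonneg fun _ _ => abs_nonneg _, ?_⟩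
  intro x
  rw [hrep]
  have hq0 : |q.eval (vv x)| ≤ ∑ i ∈ Finset.range (q.natDegree + 1), |q.coeff i| := by
    rw [Polynomial.eval_eq_sum_range]
    refine (Finset.abs_sum_le_sum_abs _ _).trans ?_
    apply Finset.sum_le_sum
    intro i _
    rw [abs_mul]
    calc |q.coeff i| * |vv x ^ i| ≤ |q.coeff i| * 1 := by
          apply mul_le_mul_of_nonneg_left _ (abs_nonneg _)
          rw [abs_pow]
          apply pow_le_one₀ (abs_nonneg _)
          rw [abs_of_pos (vv_pos x)]; exact vv_le_one x
      _ = |q.coeff i| := mul_one _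
  have : |Polynomial.eval (vv x) p| = |q.eval (vv x)| * vv x := by
    rw [hq]
    simp [abs_mul, abs_of_pos (vv_pos x), mul_comm]
  rw [this]
  calc |q.eval (vv x)| * vv x ≤ (∑ i ∈ Finset.range (q.natDegree + 1), |q.coeff i|) * Real.exp (-(x/2)) := by
        apply mul_le_mul hq0 (vv_le_exp x) (le_of_lt (vv_pos x)) (Finset.sum_nonneg fun _ _ => abs_nonneg _)


-- placeholders from chunk a
lemma tendsto_pow_mul_exp_half (p : ℕ) :
    Tendsto (fun t : ℝ => t ^ p * Real.exp (-(t / 2))) atTop (nhds 0) := by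
  have h1 : Tendsto (fun s : ℝ => (2:ℝ)^p * (s ^ p * Real.exp (-s))) atTop (nhds 0) := by
    simpa using (Real.tendsto_pow_mul_exp_neg_atTop_nhds_zero p).const_mul ((2:ℝ)^p)
  have h2 : Tendsto (fun t : ℝ => t / 2) atTop atTop :=
    tendsto_id.atTop_div_const two_pos
  have := h1.comp h2
  refine this.congr fun t => ?_
  simp only [Function.comp]
  rw [div_pow]
  field_simp

lemma A5 (p r : ℕ) (x : ℝ) :
    Tendsto (fun t : ℝ => t ^ p * iteratedDeriv r h (x + t)) atTop (nhds 0) := by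
  obtain ⟨C, hC0, hC⟩ := iteratedDeriv_h_bound r
  have key : Tendsto (fun t : ℝ => C * Real.exp (-(x/2)) * (t ^ p * Real.exp (-(t / 2))))
      atTop (nhds 0) := by
    simpa using (tendsto_pow_mul_exp_half p).const_mul (C * Real.exp (-(x/2)))
  refine squeeze_zero_norm' ?_ key
  filter_upwards [eventually_ge_atTop (0:ℝ)] with t ht
  rw [Real.norm_eq_abs, abs_mul, abs_pow, abs_of_nonneg ht]
  calc t ^ p * |iteratedDeriv r h (x + t)| ≤ t ^ p * (C * Real.exp (-((x + t) / 2))) := by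
        exact mul_le_mul_of_nonneg_left (hC _) (pow_nonneg ht p)
    _ = C * Real.exp (-(x/2)) * (t ^ p * Real.exp (-(t / 2))) := by
        rw [show -((x+t)/2) = -(x/2) + -(t/2) by ring, Real.exp_add]; ring

lemma A4 (p r : ℕ) (x y : ℝ) :
    IntegrableOn (fun t : ℝ => t ^ p * iteratedDeriv r h (x + t)) (Ioi y) := by
  obtain ⟨C, hC0, hC⟩ := iteratedDeriv_h_bound r
  apply integrable_of_isBigO_exp_neg (b := 1/4) (by norm_num)
  · exact (Continuous.mul (continuous_pow p)
      ((continuous_iteratedDeriv_h r).comp (continuous_const.add continuous_id))).continuousOn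
  · rw [Asymptotics.isBigO_iff]
    refine ⟨C * Real.exp (-(x/2)), ?_⟩
    have hev : ∀ᶠ t : ℝ in atTop, t ^ p * Real.exp (-(t/4)) ≤ 1 := by
      have : Tendsto (fun t : ℝ => t ^ p * Real.exp (-(t / 4))) atTop (nhds 0) := by
        have h1 : Tendsto (fun s : ℝ => (4:ℝ)^p * (s ^ p * Real.exp (-s))) atTop (nhds 0) := by
          simpa using (Real.tendsto_pow_mul_exp_neg_atTop_nhds_zero p).const_mul ((4:ℝ)^p)
        have h2 : Tendsto (fun t : ℝ => t / 4) atTop atTop :=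
          tendsto_id.atTop_div_const four_pos
        refine (h1.comp h2).congr fun t => ?_
        simp only [Function.comp]
        rw [div_pow]; field_simp
      filter_upwards [this.eventually (eventually_le_nhds one_pos)] with t ht using ht
    filter_upwards [eventually_ge_atTop (0:ℝ), hev] with t ht hev1
    rw [Real.norm_eq_abs, Real.norm_eq_abs, abs_mul, abs_pow, abs_of_nonneg ht]
    have : |iteratedDeriv r h (x + t)| ≤ C * Real.exp (-(x/2)) * Real.exp (-(t/2)) := by
      calc |iteratedDeriv r h (x + t)| ≤ C * Real.exp (-((x + t) / 2)) := hC _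
        _ = C * Real.exp (-(x/2)) * Real.exp (-(t/2)) := by
            rw [show -((x+t)/2) = -(x/2) + -(t/2) by ring, Real.exp_add]; ring
    calc t ^ p * |iteratedDeriv r h (x + t)|
        ≤ t ^ p * (C * Real.exp (-(x/2)) * Real.exp (-(t/2))) :=
          mul_le_mul_of_nonneg_left this (pow_nonneg ht p)
      _ = (t ^ p * Real.exp (-(t/4))) * (C * Real.exp (-(x/2)) * Real.exp (-(t/4))) := by
          rw [show Real.exp (-(t/2)) = Real.exp (-(t/4)) * Real.exp (-(t/4)) by
            rw [← Real.exp_add]; ring_nf]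
          ring
      _ ≤ 1 * (C * Real.exp (-(x/2)) * Real.exp (-(t/4))) := by
          apply mul_le_mul_of_nonneg_right hev1
          positivity
      _ = C * Real.exp (-(x/2)) * |Real.exp (-(1/4) * t)| := by
          rw [abs_of_pos (Real.exp_pos _), one_mul]
          ring_nf


lemma hasDerivAt_shift (r : ℕ) (x t : ℝ) :
    HasDerivAt (fun t => iteratedDeriv r h (x + t)) (iteratedDeriv (r + 1) h (x + t)) t := by
  have := (hasDerivAt_iteratedDeriv_h r (x + t)).comp t ((hasDerivAt_id t).const_add x)
  simpa [Function.comp_def] using this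

/-- one integration by parts -/
lemma B (p r : ℕ) (x y : ℝ) :
    ∫ t in Ioi y, t ^ p * iteratedDeriv (r + 1) h (x + t)
      = -(y ^ p * iteratedDeriv r h (x + y))
        - p * ∫ t in Ioi y, t ^ (p - 1) * iteratedDeriv r h (x + t) := by
  have hderiv : ∀ t : ℝ, HasDerivAt (fun t : ℝ => t ^ p * iteratedDeriv r h (x + t))
      ((p : ℝ) * t ^ (p - 1) * iteratedDeriv r h (x + t)
        + t ^ p * iteratedDeriv (r + 1) h (x + t)) t := by
    intro t
    exact (hasDerivAt_pow p t).mul (hasDerivAt_shift r x t)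
  have hint1 : IntegrableOn
      (fun t : ℝ => (p : ℝ) * t ^ (p - 1) * iteratedDeriv r h (x + t)) (Ioi y) := by
    have := (A4 (p - 1) r x y).const_mul (p : ℝ)
    exact this.congr (Eventually.of_forall fun t => by ring)
  have hint : IntegrableOn (fun t : ℝ =>
      (p : ℝ) * t ^ (p - 1) * iteratedDeriv r h (x + t)
        + t ^ p * iteratedDeriv (r + 1) h (x + t)) (Ioi y) :=
    hint1.add (A4 p (r + 1) x y)
  have key := integral_Ioi_of_hasDerivAt_of_tendsto' (f' := fun t : ℝ =>
      (p : ℝ) * t ^ (p - 1) * iteratedDeriv r h (x + t)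
        + t ^ p * iteratedDeriv (r + 1) h (x + t))
      (fun t _ => hderiv t) hint (A5 p r x)
  rw [integral_add hint1 (A4 p (r + 1) x y)] at key
  have h2 : ∫ t in Ioi y, (p : ℝ) * t ^ (p - 1) * iteratedDeriv r h (x + t)
      = p * ∫ t in Ioi y, t ^ (p - 1) * iteratedDeriv r h (x + t) := by
    rw [← integral_const_mul]
    exact integral_congr_ae (Eventually.of_forall fun t => by ring)
  rw [h2] at key
  linarith [key]

/-- full expansion -/
lemma Bfull (p : ℕ) : ∀ (d : ℕ) (x y : ℝ),
    ∫ t in Ioi y, t ^ p * iteratedDeriv (p + 1 + d) h (x + t)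
      = ∑ s ∈ Finset.range (p + 1), (-1 : ℝ) ^ (p + s + 1)
          * ((p.factorial : ℝ) / s.factorial) * y ^ s * iteratedDeriv (d + s) h (x + y) := by
  induction p with
  | zero =>
    intro d x y
    have hB := B 0 d x y
    simp only [pow_zero, one_mul, Nat.cast_zero, zero_mul, sub_zero] at hB
    simp only [pow_zero, one_mul]
    rw [show 0 + 1 + d = d + 1 by ring, hB]
    simp [Nat.factorial]
  | succ p ih =>
    intro d x y
    have hB := B (p + 1) (p + 1 + d) x y
    simp only [Nat.add_sub_cancel] at hB
    rw [show p + 1 + 1 + d = p + 1 + d + 1 by ring, hB, ih d x y,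
      Finset.sum_range_succ _ (p + 1)]
    have hlast : (-1 : ℝ) ^ (p + 1 + (p + 1) + 1)
        * (((p + 1).factorial : ℝ) / ((p + 1).factorial)) * y ^ (p + 1)
        * iteratedDeriv (d + (p + 1)) h (x + y)
        = -(y ^ (p + 1) * iteratedDeriv (p + 1 + d) h (x + y)) := by
      rw [div_self (by exact_mod_cast (Nat.factorial_pos (p + 1)).ne' :
        (((p + 1).factorial : ℝ)) ≠ 0)]
      rw [show d + (p + 1) = p + 1 + d by ring]
      rw [show p + 1 + (p + 1) + 1 = 2 * (p + 1) + 1 by ring, pow_succ, pow_mul]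
      norm_num
    rw [hlast]
    have hterm : ∀ s ∈ Finset.range (p + 1),
        (-1 : ℝ) ^ (p + 1 + s + 1) * (((p + 1).factorial : ℝ) / s.factorial) * y ^ s
          * iteratedDeriv (d + s) h (x + y)
        = (-((p : ℝ) + 1)) * ((-1 : ℝ) ^ (p + s + 1) * ((p.factorial : ℝ) / s.factorial)
          * y ^ s * iteratedDeriv (d + s) h (x + y)) := by
      intro s _
      rw [show p + 1 + s + 1 = (p + s + 1) + 1 by ring, pow_succ, Nat.factorial_succ]
      push_cast
      ring
    rw [Finset.sum_congr rfl hterm, ← Finset.mul_sum]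
    push_cast
    ring



noncomputable def ee (j j' : ℕ) : ℝ :=
  if j' ≤ j + 1 then (-1 : ℝ) ^ (j + j') * (((j + 1).factorial : ℝ) / (j'.factorial : ℝ)) else 0

noncomputable def nxt (i : ℕ) (c : ℕ → ℝ) (j' : ℕ) : ℝ :=
  ∑ j ∈ Finset.range (i + 1), c j * ee j j'

noncomputable def cseq : ℕ → ℕ → ℝ
  | 0 => fun j => if j = 0 then 1 else 0
  | (i + 1) => nxt i (cseq i)

/-- weight in the key sum -/
noncomputable def w (i j : ℕ) : ℝ :=
  ((2 * i - j).factorial : ℝ) * (j + 1) / (2 ^ (i - j) * ((i - j).factorial : ℝ))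

lemma key_sum (i : ℕ) : ∀ a : ℕ, a ≤ i + 1 →
    ∑ j ∈ Finset.range (i + 1), (if i ≤ j + a then w i j else 0)
      = ((i + 1 + a).factorial : ℝ) / (2 ^ a * (a.factorial : ℝ)) := by
  intro a
  induction a with
  | zero =>
    intro _
    have h1 : ∀ j ∈ Finset.range (i + 1),
        (if i ≤ j + 0 then w i j else 0) = (if j = i then w i j else 0) := by
      intro j hj
      simp only [Finset.mem_range] at hj
      by_cases hc : j = i
      · subst hc; simp
      · rw [if_neg (by omega), if_neg hc]
    rw [Finset.sum_congr rfl h1, Finset.sum_ite_eq' (Finset.range (i + 1)) i (w i),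
      if_pos (Finset.mem_range.mpr (by omega))]
    rw [w]
    rw [show 2 * i - i = i from by omega, show i - i = 0 from by omega]
    simp [Nat.factorial_succ]
    ring
  | succ a ih =>
    intro ha
    by_cases hai : a + 1 ≤ i
    · -- generic case: one new term appears
      have hsplit : ∀ j ∈ Finset.range (i + 1),
          (if i ≤ j + (a + 1) then w i j else 0)
            = (if i ≤ j + a then w i j else 0) + (if j = i - a - 1 then w i j else 0) := by
        intro j hj
        simp only [Finset.mem_range] at hj
        by_cases h1 : i ≤ j + a
        · rw [if_pos (by omega), if_pos h1, if_neg (by omega), add_zero]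
        · by_cases h2 : j = i - a - 1
          · rw [if_pos (by omega), if_neg h1, if_pos h2, zero_add]
          · rw [if_neg (by omega), if_neg h1, if_neg h2, add_zero]
      rw [Finset.sum_congr rfl hsplit, Finset.sum_add_distrib, ih (by omega),
        Finset.sum_ite_eq' (Finset.range (i + 1)) (i - a - 1) (w i),
        if_pos (Finset.mem_range.mpr (by omega))]
      rw [w, show 2 * i - (i - a - 1) = i + a + 1 from by omega,
        show i - (i - a - 1) = a + 1 from by omega]
      have hc1 : ((i - a - 1 : ℕ) : ℝ) = (i : ℝ) - a - 1 := by
        push_cast [Nat.cast_sub (show a + 1 ≤ i from hai)]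
        have : ((i - (a+1) : ℕ) : ℝ) = (i : ℝ) - (a + 1) := by
          rw [Nat.cast_sub hai]; push_cast; ring
        rw [show i - a - 1 = i - (a + 1) from by omega, this]; ring
      rw [hc1]
      have e1 : ((i + 1 + (a + 1)).factorial : ℝ) = (i + a + 2) * ((i + a + 1).factorial : ℝ) := by
        rw [show i + 1 + (a + 1) = (i + a + 1) + 1 from by omega, Nat.factorial_succ]
        push_cast; ring
      have e2 : ((a + 1).factorial : ℝ) = (a + 1) * (a.factorial : ℝ) := by
        rw [Nat.factorial_succ]; push_cast; ring
      have e3 : ((i + 1 + a).factorial : ℝ) = ((i + a + 1).factorial : ℝ) := by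
        rw [show i + 1 + a = i + a + 1 from by omega]
      rw [e1, e2, e3]
      have hf : (0:ℝ) < ((i + a + 1).factorial : ℝ) := by exact_mod_cast Nat.factorial_pos _
      have ha0 : (0:ℝ) < (a.factorial : ℝ) := by exact_mod_cast Nat.factorial_pos _
      field_simp
      ring
    · -- a = i : condition is trivially true on both levels
      have hai' : a = i := by omega
      have ih' := ih (by omega)
      rw [hai'] at ih' ⊢
      have hsame : ∀ j ∈ Finset.range (i + 1),
          (if i ≤ j + (i + 1) then w i j else 0) = (if i ≤ j + i then w i j else 0) := by
        intro j hj
        rw [if_pos (by omega), if_pos (by omega)]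
      rw [Finset.sum_congr rfl hsame, ih']
      have e1 : ((i + 1 + (i + 1)).factorial : ℝ)
          = (2 * i + 2) * ((2 * i + 1).factorial : ℝ) := by
        rw [show i + 1 + (i + 1) = (2 * i + 1) + 1 from by omega, Nat.factorial_succ]
        push_cast; ring
      have e2 : ((i + 1).factorial : ℝ) = (i + 1) * (i.factorial : ℝ) := by
        rw [Nat.factorial_succ]; push_cast; ring
      have e3 : ((i + 1 + i).factorial : ℝ) = ((2 * i + 1).factorial : ℝ) := by
        rw [show i + 1 + i = 2 * i + 1 from by omega]
      rw [e1, e2, e3]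
      have hf : (0:ℝ) < ((2 * i + 1).factorial : ℝ) := by exact_mod_cast Nat.factorial_pos _
      have hi0 : (0:ℝ) < (i.factorial : ℝ) := by exact_mod_cast Nat.factorial_pos _
      field_simp
      ring

/-- closed form for cseq -/
lemma cseq_closed (i : ℕ) : ∀ j : ℕ, cseq i j =
    if j ≤ i then
      (-1 : ℝ) ^ j * ((2 * i - j).factorial : ℝ)
        / (2 ^ (i - j) * ((i - j).factorial : ℝ) * (j.factorial : ℝ))
    else 0 := by
  induction i with
  | zero =>
    intro j
    cases j with
    | zero => simp [cseq]
    | succ j => simp [cseq]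
  | succ i ih =>
    intro j'
    show nxt i (cseq i) j' = _
    rw [nxt]
    by_cases hj' : j' ≤ i + 1
    · rw [if_pos hj']
      have hterm : ∀ j ∈ Finset.range (i + 1), cseq i j * ee j j'
          = ((-1 : ℝ) ^ j' / (j'.factorial : ℝ)) * (if i ≤ j + (i + 1 - j') then w i j else 0) := by
        intro j hj
        simp only [Finset.mem_range] at hj
        rw [ih j, if_pos (by omega), ee]
        by_cases hle : j' ≤ j + 1
        · rw [if_pos hle, if_pos (by omega), w]
          have hsgn : (-1 : ℝ) ^ (j + j') = (-1 : ℝ) ^ j * (-1 : ℝ) ^ j' := pow_add _ _ _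
          have hfs : (((j + 1).factorial : ℝ)) = (j + 1) * (j.factorial : ℝ) := by
            rw [Nat.factorial_succ]; push_cast; ring
          rw [hsgn, hfs]
          have hf1 : (0:ℝ) < (j.factorial : ℝ) := by exact_mod_cast Nat.factorial_pos _
          have hf2 : (0:ℝ) < (j'.factorial : ℝ) := by exact_mod_cast Nat.factorial_pos _
          have hf3 : (0:ℝ) < ((i - j).factorial : ℝ) := by exact_mod_cast Nat.factorial_pos _
          have hf4 : (0:ℝ) < ((2 * i - j).factorial : ℝ) := by exact_mod_cast Nat.factorial_pos _
          have hsq : (-1:ℝ) ^ j * (-1:ℝ) ^ j = 1 := by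
            rw [← pow_add, ← two_mul, pow_mul]; norm_num
          have hsq2 : (-1:ℝ) ^ (j * 2) = 1 := by rw [pow_mul, sq]; exact hsq
          field_simp
          ring_nf
          simp only [hsq2]
        · rw [if_neg hle, if_neg (by omega), mul_zero, mul_zero]
      rw [Finset.sum_congr rfl hterm, ← Finset.mul_sum, key_sum i (i + 1 - j') (by omega)]
      rw [show i + 1 + (i + 1 - j') = 2 * (i + 1) - j' from by omega,
        show i + 1 - j' = i + 1 - j' from rfl]
      field_simp
    · rw [if_neg hj']
      apply Finset.sum_eq_zero
      intro j hj
      simp only [Finset.mem_range] at hj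
      rw [ee, if_neg (by omega), mul_zero]

lemma cseq_zero (i : ℕ) : cseq i 0 = dfac i := by
  rw [cseq_closed i 0, if_pos (Nat.zero_le i)]
  simp [dfac, Nat.factorial]


noncomputable def T (cx cy : ℕ → ℝ) (i i' r₀ : ℕ) (x y : ℝ) : ℝ :=
  ∑ a ∈ Finset.range (i + 1), ∑ b ∈ Finset.range (i' + 1),
    cx a * cy b * x ^ a * y ^ b * iteratedDeriv (r₀ + a + b) h (x + y)

lemma T_integrand_eq (cx cy : ℕ → ℝ) (i i' r₀ : ℕ) (x : ℝ) :
    (fun t : ℝ => t * T cx cy i i' r₀ x t)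
      = fun t : ℝ => ∑ a ∈ Finset.range (i + 1), ∑ b ∈ Finset.range (i' + 1),
          (cx a * cy b * x ^ a) * (t ^ (b + 1) * iteratedDeriv (r₀ + a + b) h (x + t)) := by
  funext t
  rw [T, Finset.mul_sum]
  refine Finset.sum_congr rfl fun a _ => ?_
  rw [Finset.mul_sum]
  refine Finset.sum_congr rfl fun b _ => ?_
  ring

lemma T_int (cx cy : ℕ → ℝ) (i i' r₀ : ℕ) (x y : ℝ) :
    IntegrableOn (fun t : ℝ => t * T cx cy i i' r₀ x t) (Ioi y) := by
  rw [T_integrand_eq]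
  exact integrable_finset_sum _ fun a _ => integrable_finset_sum _ fun b _ =>
    ((A4 (b + 1) (r₀ + a + b) x y).const_mul _)

lemma T_swap (cx cy : ℕ → ℝ) (i i' r₀ : ℕ) (x y : ℝ) :
    T cx cy i i' r₀ x y = T cy cx i' i r₀ y x := by
  rw [T, T, Finset.sum_comm]
  refine Finset.sum_congr rfl fun b _ => Finset.sum_congr rfl fun a _ => ?_
  rw [show r₀ + b + a = r₀ + a + b from by ring, add_comm y x]
  ring

lemma Py_T (cx cy : ℕ → ℝ) (i i' q : ℕ) :
    Py (T cx cy i i' (q + 2)) = T cx (nxt i' cy) i (i' + 1) q := by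
  funext x y
  show ∫ t in Ioi y, t * T cx cy i i' (q + 2) x t = _
  rw [T_integrand_eq]
  rw [integral_finset_sum _ fun a _ => integrable_finset_sum _ fun b _ =>
    ((A4 (b + 1) (q + 2 + a + b) x y).const_mul _)]
  have step1 : ∀ a ∈ Finset.range (i + 1),
      (∫ t in Ioi y, ∑ b ∈ Finset.range (i' + 1),
        (cx a * cy b * x ^ a) * (t ^ (b + 1) * iteratedDeriv (q + 2 + a + b) h (x + t)))
      = ∑ b ∈ Finset.range (i' + 1), (cx a * cy b * x ^ a) *
          ∑ s ∈ Finset.range (i' + 2), ee b s * y ^ s * iteratedDeriv (q + a + s) h (x + y) := by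
    intro a _
    rw [integral_finset_sum _ fun b _ => ((A4 (b + 1) (q + 2 + a + b) x y).const_mul _)]
    refine Finset.sum_congr rfl fun b hb => ?_
    rw [integral_const_mul]
    congr 1
    have hBf := Bfull (b + 1) (q + a) x y
    rw [show b + 1 + 1 + (q + a) = q + 2 + a + b from by ring] at hBf
    rw [hBf]
    have hterm : ∀ s ∈ Finset.range (b + 2),
        (-1 : ℝ) ^ (b + 1 + s + 1) * (((b + 1).factorial : ℝ) / s.factorial) * y ^ s
          * iteratedDeriv (q + a + s) h (x + y)
        = ee b s * y ^ s * iteratedDeriv (q + a + s) h (x + y) := by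
      intro s hs
      simp only [Finset.mem_range] at hs
      rw [ee, if_pos (by omega)]
      rw [show b + 1 + s + 1 = (b + s) + 2 from by ring, pow_add]
      norm_num
    rw [Finset.sum_congr rfl hterm]
    refine Finset.sum_subset (Finset.range_subset_range.mpr (by
      simp only [Finset.mem_range] at hb; omega)) fun s _ hs => ?_
    simp only [Finset.mem_range, not_lt] at hs
    rw [ee, if_neg (by omega), zero_mul, zero_mul]
  rw [Finset.sum_congr rfl step1]
  rw [T]
  refine Finset.sum_congr rfl fun a _ => ?_
  calc ∑ b ∈ Finset.range (i' + 1), (cx a * cy b * x ^ a) *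
          ∑ s ∈ Finset.range (i' + 2), ee b s * y ^ s * iteratedDeriv (q + a + s) h (x + y)
      = ∑ b ∈ Finset.range (i' + 1), ∑ s ∈ Finset.range (i' + 2),
          (cy b * ee b s) * (cx a * x ^ a * y ^ s * iteratedDeriv (q + a + s) h (x + y)) := by
        refine Finset.sum_congr rfl fun b _ => ?_
        rw [Finset.mul_sum]
        refine Finset.sum_congr rfl fun s _ => by ring
    _ = ∑ s ∈ Finset.range (i' + 2), ∑ b ∈ Finset.range (i' + 1),
          (cy b * ee b s) * (cx a * x ^ a * y ^ s * iteratedDeriv (q + a + s) h (x + y)) :=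
        Finset.sum_comm
    _ = ∑ s ∈ Finset.range (i' + 2),
          cx a * nxt i' cy s * x ^ a * y ^ s * iteratedDeriv (q + a + s) h (x + y) := by
        refine Finset.sum_congr rfl fun s _ => ?_
        rw [← Finset.sum_mul, nxt]
        ring

lemma Px_T (cx cy : ℕ → ℝ) (i i' q : ℕ) :
    Px (T cx cy i i' (q + 2)) = T (nxt i cx) cy (i + 1) i' q := by
  funext x y
  show ∫ t in Ioi x, t * T cx cy i i' (q + 2) t y = _
  have : ∀ t : ℝ, t * T cx cy i i' (q + 2) t y = t * T cy cx i' i (q + 2) y t :=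
    fun t => by rw [T_swap]
  simp_rw [this]
  have : (∫ t in Ioi x, t * T cy cx i' i (q + 2) y t) = Py (T cy cx i' i (q + 2)) y x := rfl
  rw [this, Py_T, T_swap]

lemma Py_iter (s : ℕ) : ∀ (u e i : ℕ) (cx : ℕ → ℝ),
    Py^[s] (T cx (cseq u) i u (2 * s + e)) = T cx (cseq (u + s)) i (u + s) e := by
  induction s with
  | zero => intro u e i cx; simp
  | succ s ih =>
    intro u e i cx
    rw [Function.iterate_succ_apply]
    rw [show 2 * (s + 1) + e = (2 * s + e) + 2 from by ring, Py_T]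
    have hc : nxt u (cseq u) = cseq (u + 1) := rfl
    rw [hc, ih (u + 1) e i cx, show u + 1 + s = u + (s + 1) from by ring]

lemma Px_iter (s : ℕ) : ∀ (u e i' : ℕ) (cy : ℕ → ℝ),
    Px^[s] (T (cseq u) cy u i' (2 * s + e)) = T (cseq (u + s)) cy (u + s) i' e := by
  induction s with
  | zero => intro u e i' cy; simp
  | succ s ih =>
    intro u e i' cy
    rw [Function.iterate_succ_apply]
    rw [show 2 * (s + 1) + e = (2 * s + e) + 2 from by ring, Px_T]
    have hc : nxt u (cseq u) = cseq (u + 1) := rfl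
    rw [hc, ih (u + 1) e i' cy, show u + 1 + s = u + (s + 1) from by ring]

lemma F_eq_T (r : ℕ) : (fun x y : ℝ => iteratedDeriv r h (x + y)) = T (cseq 0) (cseq 0) 0 0 r := by
  funext x y
  rw [T]
  simp [cseq]

lemma h_zero : h 0 = 1 := by
  rw [h]
  norm_num

/-- For `k = n + m`, `𝒫_x^n 𝒫_y^m [h^{(2k)}(x+y)]` at `(0,0)` equals
`(2n−1)!! · (2m−1)!!`, and all iterated integrals occurring converge. -/
theorem P_iterate_h_deriv_eq (n m k : ℕ) (hk : k = n + m) :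
    (∀ i < m, ∀ x y : ℝ,
      IntegrableOn
        (fun t => t * (Py^[i] (fun x y => iteratedDeriv (2 * k) h (x + y))) x t)
        (Set.Ioi y)) ∧
    (∀ j < n, ∀ x y : ℝ,
      IntegrableOn
        (fun t => t *
          (Px^[j] (Py^[m] (fun x y => iteratedDeriv (2 * k) h (x + y)))) t y)
        (Set.Ioi x)) ∧
    (Px^[n] (Py^[m] (fun x y => iteratedDeriv (2 * k) h (x + y)))) 0 0 =
      dfac n * dfac m := by
  subst hk
  have hPym : Py^[m] (fun x y : ℝ => iteratedDeriv (2 * (n + m)) h (x + y))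
      = T (cseq 0) (cseq m) 0 m (2 * n) := by
    rw [F_eq_T, show 2 * (n + m) = 2 * m + 2 * n from by ring, Py_iter m 0 (2 * n) 0 (cseq 0)]
    simp
  refine ⟨?_, ?_, ?_⟩
  · intro i hi x y
    have hPyi : Py^[i] (fun x y : ℝ => iteratedDeriv (2 * (n + m)) h (x + y))
        = T (cseq 0) (cseq i) 0 i (2 * (n + m - i)) := by
      rw [F_eq_T, show 2 * (n + m) = 2 * i + 2 * (n + m - i) from by omega,
        Py_iter i 0 (2 * (n + m - i)) 0 (cseq 0)]
      simp
    rw [hPyi]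
    exact T_int _ _ _ _ _ x y
  · intro j hj x y
    rw [hPym]
    have hPxj : Px^[j] (T (cseq 0) (cseq m) 0 m (2 * n))
        = T (cseq j) (cseq m) j m (2 * (n - j)) := by
      rw [show 2 * n = 2 * j + 2 * (n - j) from by omega,
        Px_iter j 0 (2 * (n - j)) m (cseq m)]
      simp
    rw [hPxj]
    have : ∀ t : ℝ, t * T (cseq j) (cseq m) j m (2 * (n - j)) t y
        = t * T (cseq m) (cseq j) m j (2 * (n - j)) y t := fun t => by rw [T_swap]
    simp_rw [this]
    exact T_int _ _ _ _ _ y x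
  · rw [hPym, show 2 * n = 2 * n + 0 from by ring, Px_iter n 0 0 m (cseq m)]
    rw [T]
    rw [Finset.sum_eq_single 0 (by
        intro a ha hane
        apply Finset.sum_eq_zero
        intro b hb
        rw [zero_pow hane]
        ring) (by intro habs; exact absurd (Finset.mem_range.mpr (by omega)) habs)]
    rw [Finset.sum_eq_single 0 (by
        intro b hb hbne
        rw [zero_pow hbne]
        ring) (by intro habs; exact absurd (Finset.mem_range.mpr (by omega)) habs)]
    simp only [pow_zero, add_zero, Nat.zero_add]
    rw [iteratedDeriv_zero, h_zero, cseq_zero, cseq_zero]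
    ring
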